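/- arXiv:2106.10312 — 8 statements merged into one kernel-verified Lean document; each statement's English description precedes it below -/
import Mathlib

section
/- Let X be a nonnegative absolutely continuous random variable with support (0,s) and CDF K, let ψ ≥ 0, and let Y = aX + b with a > 0 and b ≥ 0. Then CPE_γ^ψ(Y) = (a/Γ(γ+1)) ∫_0^s ψ(ax+b) K(x) (−ln K(x))^γ dx for all γ>0. In particular, for the weight ψ(x)=x one has CPE_γ^{ψ(x)=x}(Y) = a² CPE_γ^{ψ(x)=x}(X) + a b CPE_γ(X), where CPE_γ(X) = (1/Γ(γ+1)) ∫_0^s K(x)(−ln K(x))^γ dx. -/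
open MeasureTheory Set ProbabilityTheory

/-! The affine map `x ↦ a x + b` with `a > 0` carries `Iic x` onto `Iic (a x + b)`, so
`K_Y (a x + b) = K x`; the first identity is then the change of variables `y = a x + b`.
The second follows from the first with `ψ y = y` by linearity, which needs integrability:
`t (-log t) ^ γ` is bounded on `[0, 1]`, so both integrands are bounded on `(0, s)`. -/

lemma setIntegral_Ioo_comp_mul_add {a : ℝ} (ha : 0 < a) (b s : ℝ) (f : ℝ → ℝ) :
    ∫ y in Ioo b (a * s + b), f y = a * ∫ x in Ioo 0 s, f (a * x + b) := by
  rcases le_total s 0 with hs | hs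
  · have hs' : a * s + b ≤ b := by nlinarith
    simp [Ioo_eq_empty_of_le hs, Ioo_eq_empty_of_le hs']
  · have hs' : b ≤ a * s + b := by nlinarith
    rw [← integral_Ioc_eq_integral_Ioo, ← integral_Ioc_eq_integral_Ioo,
      ← intervalIntegral.integral_of_le hs', ← intervalIntegral.integral_of_le hs,
      intervalIntegral.integral_comp_mul_add f ha.ne', smul_eq_mul, mul_zero, zero_add,
      mul_inv_cancel_left₀ ha.ne']

lemma map_mul_add_apply_Iic (μ : Measure ℝ) {a : ℝ} (ha : 0 < a) (b x : ℝ) :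
    μ.map (fun x => a * x + b) (Iic (a * x + b)) = μ (Iic x) := by
  rw [Measure.map_apply (by fun_prop) measurableSet_Iic]
  congr 1
  ext t
  simp [mul_le_mul_iff_right₀ ha]

lemma mul_neg_log_rpow_le {t γ : ℝ} (ht0 : 0 ≤ t) (ht1 : t ≤ 1) (hγ : 0 < γ) :
    t * (-Real.log t) ^ γ ≤ γ ^ γ := by
  rcases ht0.eq_or_lt with rfl | ht
  · simpa using Real.rpow_nonneg hγ.le γ
  have hlog : 0 ≤ -Real.log t := neg_nonneg.2 (Real.log_nonpos ht0 ht1)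
  have hbound : -Real.log t * t ^ (1 / γ) < γ := by
    have := Real.abs_log_mul_self_rpow_lt t (1 / γ) ht ht1 (by positivity)
    rwa [one_div_one_div, abs_mul, abs_of_nonpos (Real.log_nonpos ht0 ht1),
      abs_of_pos (by positivity)] at this
  calc t * (-Real.log t) ^ γ = ((t ^ (1 / γ)) * -Real.log t) ^ γ := by
        rw [Real.mul_rpow (by positivity) hlog, ← Real.rpow_mul ht0, one_div_mul_cancel hγ.ne',
          Real.rpow_one]
    _ ≤ γ ^ γ := Real.rpow_le_rpow (by positivity) (by linarith) hγ.le

lemma integrableOn_mul_neg_log_rpow {α : Type*} [MeasurableSpace α] {μ : Measure α}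
    {F : α → ℝ} (hF : Measurable F) (hF0 : ∀ x, 0 ≤ F x) (hF1 : ∀ x, F x ≤ 1)
    {γ : ℝ} (hγ : 0 < γ) {S : Set α} (hS : μ S ≠ ⊤) :
    IntegrableOn (fun x => F x * (-Real.log (F x)) ^ γ) S μ := by
  refine Measure.integrableOn_of_bounded (M := γ ^ γ) hS (by fun_prop) (ae_of_all _ fun x => ?_)
  rw [Real.norm_of_nonneg (mul_nonneg (hF0 x) (Real.rpow_nonneg
    (neg_nonneg.2 (Real.log_nonpos (hF0 x) (hF1 x))) γ))]
  exact mul_neg_log_rpow_le (hF0 x) (hF1 x) hγ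

theorem wfgcpe_affine_transform_general
    (s : ℝ) (a b : ℝ) (ha : 0 < a)
    (μ : Measure ℝ) [IsProbabilityMeasure μ]
    (K : ℝ → ℝ) (hK : ∀ x, K x = (μ (Set.Iic x)).toReal)
    (KY : ℝ → ℝ)
    (hKY : ∀ y, KY y = (Measure.map (fun x => a * x + b) μ (Set.Iic y)).toReal)
    (ψ : ℝ → ℝ)
    (γ : ℝ) (hγ : 0 < γ) :
    ((1 / Real.Gamma (γ + 1)) *
        ∫ y in Set.Ioo b (a * s + b), ψ y * KY y * (-Real.log (KY y)) ^ γ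
      = (a / Real.Gamma (γ + 1)) *
        ∫ x in Set.Ioo 0 s, ψ (a * x + b) * K x * (-Real.log (K x)) ^ γ)
    ∧
    ((1 / Real.Gamma (γ + 1)) *
        ∫ y in Set.Ioo b (a * s + b), y * KY y * (-Real.log (KY y)) ^ γ
      = a ^ 2 * ((1 / Real.Gamma (γ + 1)) *
            ∫ x in Set.Ioo 0 s, x * K x * (-Real.log (K x)) ^ γ)
        + a * b * ((1 / Real.Gamma (γ + 1)) *
            ∫ x in Set.Ioo 0 s, K x * (-Real.log (K x)) ^ γ)) := by
  have hKY_comp : ∀ x, KY (a * x + b) = K x := fun x => by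
    rw [hKY, hK, map_mul_add_apply_Iic μ ha]
  have hK_cdf : K = cdf μ := funext fun x => by
    rw [hK, cdf_eq_real, measureReal_def]
  have hL : IntegrableOn (fun x => K x * (-Real.log (K x)) ^ γ) (Icc 0 s) := by
    rw [hK_cdf]
    exact integrableOn_mul_neg_log_rpow (monotone_cdf μ).measurable (cdf_nonneg μ)
      (cdf_le_one μ) hγ measure_Icc_lt_top.ne
  have hxL : IntegrableOn (fun x => x * (K x * (-Real.log (K x)) ^ γ)) (Icc 0 s) :=
    hL.continuousOn_mul continuousOn_id isCompact_Icc
  simp only [setIntegral_Ioo_comp_mul_add ha, hKY_comp, mul_assoc]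
  refine ⟨by ring, ?_⟩
  simp only [add_mul, mul_assoc]
  rw [integral_add ((hxL.mono_set Ioo_subset_Icc_self).const_mul a)
    ((hL.mono_set Ioo_subset_Icc_self).const_mul b), integral_const_mul, integral_const_mul]
  ring

/-- For `Y = aX + b` with `a > 0`, `b ≥ 0`, where `X` has CDF `K` and
support `(0,s)`, one has
`CPE_γ^ψ(Y) = (a/Γ(γ+1)) ∫_0^s ψ(ax+b) K(x) (−ln K(x))^γ dx`, and in particular for
`ψ(x) = x`, `CPE_γ^{x}(Y) = a² CPE_γ^{x}(X) + a b CPE_γ(X)`. -/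
theorem wfgcpe_affine_transform
    (s : ℝ) (hs : 0 < s) (a b : ℝ) (ha : 0 < a) (hb : 0 ≤ b)
    (μ : Measure ℝ) [IsProbabilityMeasure μ] (hac : μ ≪ volume)
    (hsupp : μ (Set.Ioo 0 s) = 1)
    (K : ℝ → ℝ) (hK : ∀ x, K x = (μ (Set.Iic x)).toReal)
    (KY : ℝ → ℝ)
    (hKY : ∀ y, KY y = (Measure.map (fun x => a * x + b) μ (Set.Iic y)).toReal)
    (ψ : ℝ → ℝ) (hψ0 : ∀ x, 0 ≤ ψ x)
    (γ : ℝ) (hγ : 0 < γ) :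
    ((1 / Real.Gamma (γ + 1)) *
        ∫ y in Set.Ioo b (a * s + b), ψ y * KY y * (-Real.log (KY y)) ^ γ
      = (a / Real.Gamma (γ + 1)) *
        ∫ x in Set.Ioo 0 s, ψ (a * x + b) * K x * (-Real.log (K x)) ^ γ)
    ∧
    ((1 / Real.Gamma (γ + 1)) *
        ∫ y in Set.Ioo b (a * s + b), y * KY y * (-Real.log (KY y)) ^ γ
      = a ^ 2 * ((1 / Real.Gamma (γ + 1)) *
            ∫ x in Set.Ioo 0 s, x * K x * (-Real.log (K x)) ^ γ)
        + a * b * ((1 / Real.Gamma (γ + 1)) *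
            ∫ x in Set.Ioo 0 s, K x * (-Real.log (K x)) ^ γ)) :=
  wfgcpe_affine_transform_general s a b ha μ K hK KY hKY ψ γ hγ
end

section
/- Let X₁ and X₂ be nonnegative absolutely continuous random variables, with X₂ supported in [0,s], with CDF K₁ of X₁ having support (0,s), such that X₁ ≤_st X₂ (i.e. K₂(x) ≤ K₁(x) for all x), and suppose E(X₁) and E(X₂) are finite and unequal. Define τ_γ^ψ(u) = (1/Γ(γ+1)) ∫_u^s ψ(x)(−ln K₁(x))^γ dx and assume τ_γ^ψ(x) < +∞ and the relevant expectations are finite. Let V be the nonnegative absolutely continuous random variable with density k_V(x) = (K̄₂(x) − K̄₁(x))/(E(X₂) − E(X₁)) for x>0, where K̄ᵢ = 1−Kᵢ. Then CPE_γ^ψ(X₁) = E[τ_γ^ψ(X₂)] + E[(τ_γ^ψ)′(V)]·(E(X₁) − E(X₂)). -/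
/-!
Put `g = ψ (-ln K₁)^γ / Γ(γ+1)` on `(0, s)` and `0` elsewhere, so that `τ u = ∫_u^∞ g` for
`u ≥ 0`. By Fubini, `E[τ(X₂)] = ∫ g K₂`; by the Lebesgue differentiation theorem `τ' = -g`
almost everywhere on `(0, ∞)`, so `E[τ'(V)] (E X₁ - E X₂) = ∫ g (K₁ - K₂)`, the normalising
constant of `k_V` cancelling. The two terms add up to `∫ g K₁ = CPE_γ^ψ(X₁)`.
-/

open MeasureTheory Set Filter ProbabilityTheory Topology

section

variable {E : Type*} [NormedAddCommGroup E] [NormedSpace ℝ E]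

theorem setIntegral_Ioi_indicator_Ioo {μ : Measure ℝ} {F : ℝ → E} {a b u : ℝ} (hu : a ≤ u) :
    ∫ t in Ioi u, (Ioo a b).indicator F t ∂μ = ∫ t in Ioo u b, F t ∂μ := by
  rw [setIntegral_indicator measurableSet_Ioo, Ioi_inter_Ioo, max_eq_left hu]

theorem MeasureTheory.Integrable.ae_hasDerivAt_integral_Ioi [CompleteSpace E] {g : ℝ → E}
    (hg : Integrable g) : ∀ᵐ x, HasDerivAt (fun u => ∫ t in Ioi u, g t) (-g x) x := by
  have hIoi : ∀ u, ∫ t in Ioi u, g t = (∫ t, g t) - (∫ t in Iic 0, g t) - ∫ t in (0)..u, g t :=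
    fun u => by
      rw [← intervalIntegral.integral_Iic_sub_Iic hg.integrableOn hg.integrableOn,
        ← intervalIntegral.integral_Iic_add_Ioi hg.integrableOn hg.integrableOn]
      abel
  filter_upwards [LocallyIntegrable.ae_hasDerivAt_integral hg.locallyIntegrable] with x hx
  simpa only [hIoi, zero_sub] using (hx 0).const_sub _

end

theorem MeasureTheory.Integrable.mul_cdf {g : ℝ → ℝ} (hg : Integrable g) (μ : Measure ℝ) :
    Integrable (fun x => g x * cdf μ x) :=
  hg.mul_bdd (c := 1) (cdf μ).mono.measurable.aestronglyMeasurable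
    (.of_forall fun x => by
      rw [Real.norm_of_nonneg (cdf_nonneg μ x)]
      exact cdf_le_one μ x)

theorem integral_setIntegral_Ioi_eq_integral_mul_cdf (μ : Measure ℝ) [IsProbabilityMeasure μ]
    {g : ℝ → ℝ} (hg : Integrable g) :
    ∫ u, (∫ t in Ioi u, g t) ∂μ = ∫ t, g t * cdf μ t := by
  set F : ℝ × ℝ → ℝ := {p | p.1 ≤ p.2}.indicator fun p => g p.2
  have hF : Integrable F (μ.prod volume) :=
    (hg.comp_snd μ).indicator (measurableSet_le measurable_fst measurable_snd)
  -- Replacing `Ioi u` by `Ici u` (a Lebesgue-null change) makes the inner integral after the swap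
  -- `μ (Iic t)` rather than `μ (Iio t)`.
  calc ∫ u, (∫ t in Ioi u, g t) ∂μ = ∫ u, (∫ t, F (u, t)) ∂μ := by
        congr 1 with u
        rw [← integral_Ici_eq_integral_Ioi, ← integral_indicator measurableSet_Ici]
        rfl
    _ = ∫ t, ∫ u, F (u, t) ∂μ := integral_integral_swap (f := fun u t => F (u, t)) hF
    _ = ∫ t, g t * cdf μ t := by
        congr 1 with t
        rw [cdf_eq_real, mul_comm, ← smul_eq_mul, ← integral_indicator_const _ measurableSet_Iic]
        rfl

theorem setIntegral_Ioi_deriv_mul_eq_neg_setIntegral_mul {g h τ : ℝ → ℝ} {a : ℝ}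
    (hg : Integrable g) (hτ : ∀ u > a, τ u = ∫ t in Ioi u, g t) :
    ∫ x in Ioi a, deriv τ x * h x = -∫ x in Ioi a, g x * h x := by
  rw [← integral_neg]
  refine setIntegral_congr_ae measurableSet_Ioi ?_
  filter_upwards [hg.ae_hasDerivAt_integral_Ioi] with x hx hxa
  have hτx : τ =ᶠ[𝓝 x] fun u => ∫ t in Ioi u, g t :=
    eventually_of_mem (Ioi_mem_nhds hxa) hτ
  rw [(hx.congr_of_eventuallyEq hτx).deriv, neg_mul]

theorem wfgcpe_mean_value_representation_general
    (s : ℝ)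
    (μ₁ μ₂ : Measure ℝ) [IsProbabilityMeasure μ₁] [IsProbabilityMeasure μ₂]
    (hsupp₂ : μ₂ (Set.Icc 0 s) = 1)
    (K₁ K₂ : ℝ → ℝ)
    (hK₁ : ∀ x, K₁ x = (μ₁ (Set.Iic x)).toReal)
    (hK₂ : ∀ x, K₂ x = (μ₂ (Set.Iic x)).toReal)
    (hne : (∫ x, x ∂μ₁) ≠ ∫ x, x ∂μ₂)
    (ψ : ℝ → ℝ)
    (γ : ℝ)
    (τ : ℝ → ℝ)
    (hτ : ∀ u, τ u = (1 / Real.Gamma (γ + 1)) *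
      ∫ x in Set.Ioo u s, ψ x * (-Real.log (K₁ x)) ^ γ)
    (hτfin : IntegrableOn (fun x => ψ x * (-Real.log (K₁ x)) ^ γ) (Set.Ioo 0 s))
    (kV : ℝ → ℝ)
    (hkV : ∀ x, kV x = ((1 - K₂ x) - (1 - K₁ x)) / ((∫ x, x ∂μ₂) - ∫ x, x ∂μ₁)) :
    (1 / Real.Gamma (γ + 1)) *
        ∫ x in Set.Ioo 0 s, ψ x * K₁ x * (-Real.log (K₁ x)) ^ γ
      = (∫ u, τ u ∂μ₂)
        + (∫ x in Set.Ioi 0, deriv τ x * kV x) * ((∫ x, x ∂μ₁) - ∫ x, x ∂μ₂) := by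
  obtain rfl : K₁ = cdf μ₁ := funext fun x => by rw [hK₁, cdf_eq_real, measureReal_def]
  obtain rfl : K₂ = cdf μ₂ := funext fun x => by rw [hK₂, cdf_eq_real, measureReal_def]
  set C := 1 / Real.Gamma (γ + 1)
  set g := (Ioo 0 s).indicator fun x => C * (ψ x * (-Real.log (cdf μ₁ x)) ^ γ)
  have hg : Integrable g := (integrable_indicator_iff measurableSet_Ioo).2 (hτfin.const_mul C)
  have hτg : ∀ u, 0 ≤ u → τ u = ∫ t in Ioi u, g t := fun u hu => by
    rw [hτ, setIntegral_Ioi_indicator_Ioo hu, integral_const_mul]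
  have hcpe : C * ∫ x in Ioo 0 s, ψ x * cdf μ₁ x * (-Real.log (cdf μ₁ x)) ^ γ
      = ∫ x, g x * cdf μ₁ x := by
    rw [← integral_const_mul, ← integral_indicator measurableSet_Ioo]
    congr 1 with x
    rw [← indicator_mul_left]
    congr 1 with y
    ring
  have hmean : ∫ u, τ u ∂μ₂ = ∫ x, g x * cdf μ₂ x := by
    rw [← integral_setIntegral_Ioi_eq_integral_mul_cdf μ₂ hg]
    refine integral_congr_ae ?_
    filter_upwards [(mem_ae_iff_prob_eq_one measurableSet_Icc).2 hsupp₂] with u hu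
      using hτg u hu.1
  have hder : ∫ x in Ioi 0, deriv τ x * kV x
      = -((∫ x, g x * cdf μ₁ x) - ∫ x, g x * cdf μ₂ x) / ((∫ x, x ∂μ₂) - ∫ x, x ∂μ₁) := by
    rw [setIntegral_Ioi_deriv_mul_eq_neg_setIntegral_mul hg fun u hu => hτg u hu.le,
      setIntegral_eq_integral_of_forall_compl_eq_zero fun x hx => ?_,
      ← integral_sub (hg.mul_cdf μ₁) (hg.mul_cdf μ₂), neg_div, ← integral_div]
    · congr 2 with x
      rw [hkV]
      ring
    · exact mul_eq_zero_of_left (indicator_of_notMem (fun h => hx h.1) _) _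
  rw [hcpe, hmean, hder]
  field_simp [sub_ne_zero.2 hne.symm]
  ring

/-- Probabilistic mean value representation: if `X₁ ≤_st X₂`, the means
are finite and unequal, then
`CPE_γ^ψ(X₁) = E[τ_γ^ψ(X₂)] + E[(τ_γ^ψ)′(V)]·(E(X₁) − E(X₂))`,
where `V` has density `k_V(x) = (K̄₂(x) − K̄₁(x))/(E(X₂) − E(X₁))` on `x > 0`. -/
theorem wfgcpe_mean_value_representation
    (s : ℝ) (hs : 0 < s)
    (μ₁ μ₂ : Measure ℝ) [IsProbabilityMeasure μ₁] [IsProbabilityMeasure μ₂]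
    (hac₁ : μ₁ ≪ volume) (hac₂ : μ₂ ≪ volume)
    (hsupp₁ : μ₁ (Set.Ioo 0 s) = 1) (hsupp₂ : μ₂ (Set.Icc 0 s) = 1)
    (K₁ K₂ : ℝ → ℝ)
    (hK₁ : ∀ x, K₁ x = (μ₁ (Set.Iic x)).toReal)
    (hK₂ : ∀ x, K₂ x = (μ₂ (Set.Iic x)).toReal)
    (hst : ∀ x, K₂ x ≤ K₁ x)
    (hmean₁ : Integrable (fun x : ℝ => x) μ₁) (hmean₂ : Integrable (fun x : ℝ => x) μ₂)
    (hne : (∫ x, x ∂μ₁) ≠ ∫ x, x ∂μ₂)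
    (ψ : ℝ → ℝ) (hψ0 : ∀ x, 0 ≤ ψ x)
    (γ : ℝ) (hγ : 0 < γ)
    (τ : ℝ → ℝ)
    (hτ : ∀ u, τ u = (1 / Real.Gamma (γ + 1)) *
      ∫ x in Set.Ioo u s, ψ x * (-Real.log (K₁ x)) ^ γ)
    (hτfin : IntegrableOn (fun x => ψ x * (-Real.log (K₁ x)) ^ γ) (Set.Ioo 0 s))
    (hτint : Integrable τ μ₂)
    (kV : ℝ → ℝ)
    (hkV : ∀ x, kV x = ((1 - K₂ x) - (1 - K₁ x)) / ((∫ x, x ∂μ₂) - ∫ x, x ∂μ₁))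
    (hderint : IntegrableOn (fun x => deriv τ x * kV x) (Set.Ioi 0)) :
    (1 / Real.Gamma (γ + 1)) *
        ∫ x in Set.Ioo 0 s, ψ x * K₁ x * (-Real.log (K₁ x)) ^ γ
      = (∫ u, τ u ∂μ₂)
        + (∫ x in Set.Ioi 0, deriv τ x * kV x) * ((∫ x, x ∂μ₁) - ∫ x, x ∂μ₂) :=
  wfgcpe_mean_value_representation_general s μ₁ μ₂ hsupp₂ K₁ K₂ hK₁ hK₂ hne ψ γ τ hτ hτfin kV hkV
end

section
/- Under the assumptions of the probabilistic mean value representation — X₁, X₂ nonnegative absolutely continuous random variables with X₁ ≤_st X₂, finite unequal means, K₁ the CDF of X₁ with support (0,s), X₂ supported in [0,s], ψ ≥ 0, and τ_γ^ψ(u) = (1/Γ(γ+1)) ∫_u^s ψ(x)(−ln K₁(x))^γ dx finite — one has the lower bound CPE_γ^ψ(X₁) ≥ E[τ_γ^ψ(X₂)]. -/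
/-!
Tonelli's theorem turns the expectation of the tail integral `τ(X₂) = c ∫_{X₂}^s f` into
`c ∫_0^s f(x) P(X₂ < x) dx`, and `P(X₂ < x) ≤ K₂(x) ≤ K₁(x)` by the stochastic order.
-/

open MeasureTheory Set ProbabilityTheory
open scoped ENNReal

theorem lintegral_setLIntegral_Ioi_eq {μ ν : Measure ℝ} [SFinite μ] [SFinite ν]
    {φ : ℝ → ℝ≥0∞} (hφ : AEMeasurable φ ν) :
    ∫⁻ u, ∫⁻ x in Ioi u, φ x ∂ν ∂μ = ∫⁻ x, φ x * μ (Iio x) ∂ν := by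
  have h_indicator : ∀ u x, (Ioi u).indicator φ x = {p : ℝ × ℝ | p.1 < p.2}.indicator
      (fun p => φ p.2) (u, x) := fun u x => by
    by_cases h : u < x <;> simp [h]
  have h_meas : AEMeasurable (Function.uncurry fun u x => (Ioi u).indicator φ x) (μ.prod ν) := by
    simp only [Function.uncurry_def, h_indicator]
    exact (hφ.comp_quasiMeasurePreserving Measure.quasiMeasurePreserving_snd).indicator
      (measurableSet_lt measurable_fst measurable_snd)
  simp_rw [← lintegral_indicator measurableSet_Ioi]
  rw [lintegral_lintegral_swap h_meas]
  refine lintegral_congr fun x => ?_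
  have h_slice : (fun u => (Ioi u).indicator φ x) = (Iio x).indicator fun _ => φ x := by
    ext u; by_cases h : u < x <;> simp [h]
  rw [h_slice, lintegral_indicator measurableSet_Iio, setLIntegral_const]

theorem setIntegral_Ioo_eq_toReal_setLIntegral_Ioi {μ : Measure ℝ} {f : ℝ → ℝ} {a b u : ℝ}
    (hf0 : ∀ x, 0 ≤ f x) (hf : IntegrableOn f (Ioo a b) μ) (hu : a ≤ u) :
    ∫ x in Ioo u b, f x ∂μ =
      (∫⁻ x in Ioi u, ENNReal.ofReal (f x) ∂μ.restrict (Ioo a b)).toReal := by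
  rw [Measure.restrict_restrict measurableSet_Ioi, Ioi_inter_Ioo, max_eq_left hu,
    integral_eq_lintegral_of_nonneg_ae (ae_of_all _ hf0)
      (hf.1.mono_measure (Measure.restrict_mono (Ioo_subset_Ioo_left hu) le_rfl))]

theorem integral_setIntegral_Ioo_eq {μ : Measure ℝ} [IsFiniteMeasure μ] {f : ℝ → ℝ} {a b : ℝ}
    (hμ : ∀ᵐ u ∂μ, a ≤ u) (hf0 : ∀ x, 0 ≤ f x) (hf : IntegrableOn f (Ioo a b)) :
    ∫ u, (∫ x in Ioo u b, f x) ∂μ = ∫ x in Ioo a b, f x * μ.real (Iio x) := by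
  set ν := volume.restrict (Ioo a b)
  set G : ℝ → ℝ≥0∞ := fun u => ∫⁻ x in Ioi u, ENNReal.ofReal (f x) ∂ν
  have hG_lt_top : ∀ u, G u < ∞ := fun u =>
    (setLIntegral_le_lintegral _ _).trans_lt hf.lintegral_lt_top
  have hG_anti : Antitone G := fun u v huv => lintegral_mono_set (Ioi_subset_Ioi huv)
  calc ∫ u, (∫ x in Ioo u b, f x) ∂μ = ∫ u, (G u).toReal ∂μ :=
        integral_congr_ae
          (hμ.mono fun u hu => setIntegral_Ioo_eq_toReal_setLIntegral_Ioi hf0 hf hu)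
    _ = (∫⁻ x, ENNReal.ofReal (f x) * μ (Iio x) ∂ν).toReal := by
        rw [integral_toReal hG_anti.measurable.aemeasurable (ae_of_all _ hG_lt_top),
          lintegral_setLIntegral_Ioi_eq hf.1.aemeasurable.ennreal_ofReal]
    _ = ∫ x in Ioo a b, f x * μ.real (Iio x) := by
        have h_mono : Monotone fun x => μ.real (Iio x) := fun x y hxy =>
          measureReal_mono (Iio_subset_Iio hxy)
        rw [integral_eq_lintegral_of_nonneg_ae (f := fun x => f x * μ.real (Iio x))
          (ae_of_all _ fun x => mul_nonneg (hf0 x) measureReal_nonneg)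
          (hf.1.mul h_mono.measurable.aestronglyMeasurable)]
        congr 1
        refine lintegral_congr fun x => ?_
        rw [ENNReal.ofReal_mul (hf0 x), ofReal_measureReal]

theorem wfgcpe_ge_expectation_tau_of_st_general
    (s : ℝ)
    (μ₁ μ₂ : Measure ℝ) [IsProbabilityMeasure μ₁] [IsProbabilityMeasure μ₂]
    (hsupp₂ : μ₂ (Set.Icc 0 s) = 1)
    (K₁ K₂ : ℝ → ℝ)
    (hK₁ : ∀ x, K₁ x = (μ₁ (Set.Iic x)).toReal)
    (hK₂ : ∀ x, K₂ x = (μ₂ (Set.Iic x)).toReal)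
    (hst : ∀ x, K₂ x ≤ K₁ x)
    (ψ : ℝ → ℝ) (hψ0 : ∀ x, 0 ≤ ψ x)
    (γ : ℝ) (hγ : 0 < γ)
    (τ : ℝ → ℝ)
    (hτ : ∀ u, τ u = (1 / Real.Gamma (γ + 1)) *
      ∫ x in Set.Ioo u s, ψ x * (-Real.log (K₁ x)) ^ γ)
    (hτfin : IntegrableOn (fun x => ψ x * (-Real.log (K₁ x)) ^ γ) (Set.Ioo 0 s)) :
    (1 / Real.Gamma (γ + 1)) *
        ∫ x in Set.Ioo 0 s, ψ x * K₁ x * (-Real.log (K₁ x)) ^ γ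
      ≥ ∫ u, τ u ∂μ₂ := by
  set f := fun x => ψ x * (-Real.log (K₁ x)) ^ γ
  have hK₁_cdf : K₁ = cdf μ₁ := funext fun x => by rw [hK₁, cdf_eq_real, measureReal_def]
  subst hK₁_cdf
  have hf0 : ∀ x, 0 ≤ f x := fun x => mul_nonneg (hψ0 x) <| Real.rpow_nonneg
    (neg_nonneg.2 (Real.log_nonpos (cdf_nonneg μ₁ x) (cdf_le_one μ₁ x))) γ
  have hμ₂ : ∀ᵐ u ∂μ₂, 0 ≤ u :=
    Filter.mem_of_superset (mem_ae_iff.2 ((prob_compl_eq_zero_iff measurableSet_Icc).2 hsupp₂))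
      fun _ hu => hu.1
  have h_st : ∀ x, μ₂.real (Iio x) ≤ cdf μ₁ x := fun x =>
    (measureReal_mono Iio_subset_Iic_self).trans ((hK₂ x).ge.trans (hst x))
  have h_int : IntegrableOn (fun x => f x * cdf μ₁ x) (Ioo 0 s) :=
    hτfin.mul_bdd (cdf μ₁).mono.measurable.aestronglyMeasurable (c := 1) <| ae_of_all _ fun x => by
      rw [Real.norm_of_nonneg (cdf_nonneg μ₁ x)]; exact cdf_le_one μ₁ x
  have h_mono : ∫ x in Ioo 0 s, f x * μ₂.real (Iio x) ≤ ∫ x in Ioo 0 s, f x * cdf μ₁ x :=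
    integral_mono_of_nonneg (ae_of_all _ fun x => mul_nonneg (hf0 x) measureReal_nonneg) h_int
      (ae_of_all _ fun x => mul_le_mul_of_nonneg_left (h_st x) (hf0 x))
  have hΓ : 0 ≤ 1 / Real.Gamma (γ + 1) := by
    have := Real.Gamma_pos_of_pos (by linarith : 0 < γ + 1); positivity
  rw [ge_iff_le]
  calc ∫ u, τ u ∂μ₂ = 1 / Real.Gamma (γ + 1) * ∫ u, (∫ x in Ioo u s, f x) ∂μ₂ := by
        simp_rw [hτ]; exact integral_const_mul _ _
    _ = 1 / Real.Gamma (γ + 1) * ∫ x in Ioo 0 s, f x * μ₂.real (Iio x) := by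
        rw [integral_setIntegral_Ioo_eq hμ₂ hf0 hτfin]
    _ ≤ 1 / Real.Gamma (γ + 1) * ∫ x in Ioo 0 s, f x * cdf μ₁ x :=
        mul_le_mul_of_nonneg_left h_mono hΓ
    _ = 1 / Real.Gamma (γ + 1) * ∫ x in Ioo 0 s, ψ x * cdf μ₁ x * (-Real.log (cdf μ₁ x)) ^ γ := by
        simp_rw [f, mul_right_comm]

/-- Under the assumptions of the probabilistic mean value representation
(`X₁ ≤_st X₂`, finite unequal means, etc.), one has the lower bound
`CPE_γ^ψ(X₁) ≥ E[τ_γ^ψ(X₂)]`. -/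
theorem wfgcpe_ge_expectation_tau_of_st
    (s : ℝ) (hs : 0 < s)
    (μ₁ μ₂ : Measure ℝ) [IsProbabilityMeasure μ₁] [IsProbabilityMeasure μ₂]
    (hac₁ : μ₁ ≪ volume) (hac₂ : μ₂ ≪ volume)
    (hsupp₁ : μ₁ (Set.Ioo 0 s) = 1) (hsupp₂ : μ₂ (Set.Icc 0 s) = 1)
    (K₁ K₂ : ℝ → ℝ)
    (hK₁ : ∀ x, K₁ x = (μ₁ (Set.Iic x)).toReal)
    (hK₂ : ∀ x, K₂ x = (μ₂ (Set.Iic x)).toReal)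
    (hst : ∀ x, K₂ x ≤ K₁ x)
    (hmean₁ : Integrable (fun x : ℝ => x) μ₁) (hmean₂ : Integrable (fun x : ℝ => x) μ₂)
    (hne : (∫ x, x ∂μ₁) ≠ ∫ x, x ∂μ₂)
    (ψ : ℝ → ℝ) (hψ0 : ∀ x, 0 ≤ ψ x)
    (γ : ℝ) (hγ : 0 < γ)
    (τ : ℝ → ℝ)
    (hτ : ∀ u, τ u = (1 / Real.Gamma (γ + 1)) *
      ∫ x in Set.Ioo u s, ψ x * (-Real.log (K₁ x)) ^ γ)
    (hτfin : IntegrableOn (fun x => ψ x * (-Real.log (K₁ x)) ^ γ) (Set.Ioo 0 s))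
    (hτint : Integrable τ μ₂) :
    (1 / Real.Gamma (γ + 1)) *
        ∫ x in Set.Ioo 0 s, ψ x * K₁ x * (-Real.log (K₁ x)) ^ γ
      ≥ ∫ u, τ u ∂μ₂ :=
  wfgcpe_ge_expectation_tau_of_st_general s μ₁ μ₂ hsupp₂ K₁ K₂ hK₁ hK₂ hst ψ hψ0 γ hγ τ hτ hτfin
end

section
/- Let X be a nonnegative absolutely continuous random variable with bounded support (0,s) and CDF K, let ξ ≥ 0, and take the weight ψ(x) = (ξ(x))^γ. Define CPE^ξ(X) = −∫_0^s ξ(x) K(x) ln K(x) dx. Then: if γ ≥ 1, CPE_γ^ψ(X) ≥ (s^{1−γ}/Γ(γ+1)) · (CPE^ξ(X))^γ, while if 0<γ≤1, CPE_γ^ψ(X) ≤ (s^{1−γ}/Γ(γ+1)) · (CPE^ξ(X))^γ. -/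
open MeasureTheory Set Filter

/-!
Put `f = ξ K (-log K) ≥ 0`, so that `-∫ ξ K log K = ∫ f` and
`f ^ γ = ξ ^ γ K ^ γ (-log K) ^ γ`. Since `0 ≤ K ≤ 1`, the integrand `ξ ^ γ K (-log K) ^ γ`
dominates `f ^ γ` when `γ ≥ 1` and is dominated by it when `γ ≤ 1`. Jensen's inequality for
`t ↦ t ^ γ` on the uniform average over `(0, s)` compares `∫ f ^ γ` with `s ^ (1 - γ) (∫ f) ^ γ`
in the same direction.
-/

lemma Real.rpow_one_sub_mul_rpow {m a γ : ℝ} (hm : 0 < m) (ha : 0 ≤ a) :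
    m ^ (1 - γ) * a ^ γ = m * (a / m) ^ γ := by
  rw [Real.div_rpow ha hm.le, Real.rpow_sub hm, Real.rpow_one]
  ring

section PowerMean

variable {α : Type*} [MeasurableSpace α] {ν : Measure α} {f : α → ℝ} {γ : ℝ}

lemma MeasureTheory.Integrable.rpow_of_le_one [IsFiniteMeasure ν] (hf : Integrable f ν)
    (hf0 : 0 ≤ᵐ[ν] f) (hγ0 : 0 ≤ γ) (hγ1 : γ ≤ 1) : Integrable (fun x => f x ^ γ) ν := by
  refine ((integrable_const 1).add hf).mono'
    ((Real.continuous_rpow_const hγ0).comp_aestronglyMeasurable hf.1) ?_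
  filter_upwards [hf0] with x (hx : 0 ≤ f x)
  rw [Real.norm_eq_abs, abs_of_nonneg (Real.rpow_nonneg hx γ), Pi.add_apply]
  rcases le_total (f x) 1 with h | h
  · linarith [Real.rpow_le_one hx h hγ0]
  · linarith [Real.rpow_le_self_of_one_le h hγ1]

variable [IsFiniteMeasure ν] [NeZero ν]

lemma measureReal_univ_rpow_one_sub_mul_integral_rpow_le (hγ : 1 ≤ γ) (hf0 : 0 ≤ᵐ[ν] f)
    (hf : Integrable f ν) (hfγ : Integrable (fun x => f x ^ γ) ν) :
    ν.real univ ^ (1 - γ) * (∫ x, f x ∂ν) ^ γ ≤ ∫ x, f x ^ γ ∂ν := by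
  have hm := measureReal_univ_pos (μ := ν)
  have jensen := (convexOn_rpow hγ).map_average_le
    (Real.continuous_rpow_const (by linarith)).continuousOn isClosed_Ici hf0 hf hfγ
  simp only [average_eq, smul_eq_mul, inv_mul_eq_div] at jensen
  rw [Real.rpow_one_sub_mul_rpow hm (integral_nonneg_of_ae hf0)]
  calc _ ≤ ν.real univ * ((∫ x, f x ^ γ ∂ν) / ν.real univ) := by gcongr
    _ = ∫ x, f x ^ γ ∂ν := mul_div_cancel₀ _ hm.ne'

lemma integral_rpow_le_measureReal_univ_rpow_one_sub_mul (hγ0 : 0 ≤ γ) (hγ1 : γ ≤ 1)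
    (hf0 : 0 ≤ᵐ[ν] f) (hf : Integrable f ν) :
    ∫ x, f x ^ γ ∂ν ≤ ν.real univ ^ (1 - γ) * (∫ x, f x ∂ν) ^ γ := by
  have hm := measureReal_univ_pos (μ := ν)
  have jensen := (Real.concaveOn_rpow hγ0 hγ1).le_map_average
    (Real.continuous_rpow_const hγ0).continuousOn isClosed_Ici hf0 hf
    (hf.rpow_of_le_one hf0 hγ0 hγ1)
  simp only [average_eq, smul_eq_mul, inv_mul_eq_div] at jensen
  rw [Real.rpow_one_sub_mul_rpow hm (integral_nonneg_of_ae hf0)]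
  calc _ = ν.real univ * ((∫ x, f x ^ γ ∂ν) / ν.real univ) :=
        (mul_div_cancel₀ _ hm.ne').symm
    _ ≤ _ := by gcongr

end PowerMean

lemma Real.mul_rpow_mul_le_of_one_le {a k b γ : ℝ} (ha : 0 ≤ a) (hk0 : 0 ≤ k) (hk1 : k ≤ 1)
    (hb : 0 ≤ b) (hγ : 1 ≤ γ) : (a * k * b) ^ γ ≤ a ^ γ * k * b ^ γ := by
  rw [Real.mul_rpow (mul_nonneg ha hk0) hb, Real.mul_rpow ha hk0]
  gcongr
  exact Real.rpow_le_self_of_le_one hk0 hk1 hγ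

lemma Real.mul_mul_rpow_le_of_le_one {a k b γ : ℝ} (ha : 0 ≤ a) (hk0 : 0 ≤ k) (hk1 : k ≤ 1)
    (hb : 0 ≤ b) (hγ : γ ≤ 1) : a ^ γ * k * b ^ γ ≤ (a * k * b) ^ γ := by
  rw [Real.mul_rpow (mul_nonneg ha hk0) hb, Real.mul_rpow ha hk0]
  gcongr
  exact Real.self_le_rpow_of_le_one hk0 hk1 hγ

theorem wfgcpe_bound_weighted_cpe_general
    (s : ℝ) (hs : 0 < s)
    (μ : Measure ℝ) [IsProbabilityMeasure μ]
    (K : ℝ → ℝ) (hK : ∀ x, K x = (μ (Set.Iic x)).toReal)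
    (ξ : ℝ → ℝ) (hξ0 : ∀ x, 0 ≤ ξ x)
    (γ : ℝ) (hγ : 0 < γ)
    (hfin : IntegrableOn (fun x => (ξ x) ^ γ * K x * (-Real.log (K x)) ^ γ)
      (Set.Ioo 0 s))
    (hfin' : IntegrableOn (fun x => ξ x * K x * Real.log (K x)) (Set.Ioo 0 s)) :
    (1 ≤ γ →
      (1 / Real.Gamma (γ + 1)) *
          ∫ x in Set.Ioo 0 s, (ξ x) ^ γ * K x * (-Real.log (K x)) ^ γ
        ≥ (s ^ (1 - γ) / Real.Gamma (γ + 1)) *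
            (-∫ x in Set.Ioo 0 s, ξ x * K x * Real.log (K x)) ^ γ)
    ∧ (γ ≤ 1 →
      (1 / Real.Gamma (γ + 1)) *
          ∫ x in Set.Ioo 0 s, (ξ x) ^ γ * K x * (-Real.log (K x)) ^ γ
        ≤ (s ^ (1 - γ) / Real.Gamma (γ + 1)) *
            (-∫ x in Set.Ioo 0 s, ξ x * K x * Real.log (K x)) ^ γ) := by
  have : NeZero (volume.restrict (Ioo 0 s)) := ⟨by simp [Measure.restrict_eq_zero, hs]⟩
  have hvol : (volume.restrict (Ioo 0 s)).real univ = s := by simp [hs.le]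
  have hK0 (x : ℝ) : 0 ≤ K x := hK x ▸ ENNReal.toReal_nonneg
  have hK1 (x : ℝ) : K x ≤ 1 := hK x ▸ measureReal_le_one
  have hlog (x : ℝ) : 0 ≤ -Real.log (K x) := neg_nonneg.2 (Real.log_nonpos (hK0 x) (hK1 x))
  set f : ℝ → ℝ := fun x => ξ x * K x * -Real.log (K x)
  have hf0 (x : ℝ) : 0 ≤ f x := mul_nonneg (mul_nonneg (hξ0 x) (hK0 x)) (hlog x)
  have hf0ae : 0 ≤ᵐ[volume.restrict (Ioo 0 s)] f := ae_of_all _ hf0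
  have hf : IntegrableOn f (Ioo 0 s) := by simpa only [f, mul_neg, Pi.neg_def] using hfin'.neg
  have hcpe : -∫ x in Ioo 0 s, ξ x * K x * Real.log (K x) = ∫ x in Ioo 0 s, f x := by
    simp only [f, mul_neg, integral_neg]
  have hΓ : 0 < Real.Gamma (γ + 1) := Real.Gamma_pos_of_pos (by linarith)
  rw [hcpe, one_div_mul_eq_div, div_mul_eq_mul_div]
  constructor
  · intro h1
    have hpt (x : ℝ) : f x ^ γ ≤ ξ x ^ γ * K x * (-Real.log (K x)) ^ γ :=
      Real.mul_rpow_mul_le_of_one_le (hξ0 x) (hK0 x) (hK1 x) (hlog x) h1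
    have hfγ : IntegrableOn (fun x => f x ^ γ) (Ioo 0 s) :=
      hfin.mono' ((Real.continuous_rpow_const hγ.le).comp_aestronglyMeasurable hf.1)
        (ae_of_all _ fun x => (Real.norm_of_nonneg (Real.rpow_nonneg (hf0 x) γ)).trans_le
          (hpt x))
    refine div_le_div_of_nonneg_right ?_ hΓ.le
    calc s ^ (1 - γ) * (∫ x in Ioo 0 s, f x) ^ γ ≤ ∫ x in Ioo 0 s, f x ^ γ := by
          simpa only [hvol] using
            measureReal_univ_rpow_one_sub_mul_integral_rpow_le h1 hf0ae hf hfγ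
      _ ≤ _ := integral_mono hfγ hfin hpt
  · intro h1
    have hpt (x : ℝ) : ξ x ^ γ * K x * (-Real.log (K x)) ^ γ ≤ f x ^ γ :=
      Real.mul_mul_rpow_le_of_le_one (hξ0 x) (hK0 x) (hK1 x) (hlog x) h1
    refine div_le_div_of_nonneg_right ?_ hΓ.le
    calc _ ≤ ∫ x in Ioo 0 s, f x ^ γ :=
          integral_mono hfin (hf.rpow_of_le_one hf0ae hγ.le h1) hpt
      _ ≤ s ^ (1 - γ) * (∫ x in Ioo 0 s, f x) ^ γ := by
          simpa only [hvol] using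
            integral_rpow_le_measureReal_univ_rpow_one_sub_mul hγ.le h1 hf0ae hf

/-- For the weight `ψ(x) = (ξ(x))^γ`, with
`CPE^ξ(X) = −∫_0^s ξ(x) K(x) ln K(x) dx`, one has
`CPE_γ^ψ(X) ≥ (s^{1−γ}/Γ(γ+1)) (CPE^ξ(X))^γ` if `γ ≥ 1`, and the reverse
inequality if `0 < γ ≤ 1`. -/
theorem wfgcpe_bound_weighted_cpe
    (s : ℝ) (hs : 0 < s)
    (μ : Measure ℝ) [IsProbabilityMeasure μ] (hac : μ ≪ volume)
    (hsupp : μ (Set.Ioo 0 s) = 1)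
    (K : ℝ → ℝ) (hK : ∀ x, K x = (μ (Set.Iic x)).toReal)
    (ξ : ℝ → ℝ) (hξ0 : ∀ x, 0 ≤ ξ x)
    (γ : ℝ) (hγ : 0 < γ)
    (hfin : IntegrableOn (fun x => (ξ x) ^ γ * K x * (-Real.log (K x)) ^ γ)
      (Set.Ioo 0 s))
    (hfin' : IntegrableOn (fun x => ξ x * K x * Real.log (K x)) (Set.Ioo 0 s)) :
    (1 ≤ γ →
      (1 / Real.Gamma (γ + 1)) *
          ∫ x in Set.Ioo 0 s, (ξ x) ^ γ * K x * (-Real.log (K x)) ^ γ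
        ≥ (s ^ (1 - γ) / Real.Gamma (γ + 1)) *
            (-∫ x in Set.Ioo 0 s, ξ x * K x * Real.log (K x)) ^ γ)
    ∧ (γ ≤ 1 →
      (1 / Real.Gamma (γ + 1)) *
          ∫ x in Set.Ioo 0 s, (ξ x) ^ γ * K x * (-Real.log (K x)) ^ γ
        ≤ (s ^ (1 - γ) / Real.Gamma (γ + 1)) *
            (-∫ x in Set.Ioo 0 s, ξ x * K x * Real.log (K x)) ^ γ) :=
  wfgcpe_bound_weighted_cpe_general s hs μ K hK ξ hξ0 γ hγ hfin hfin'
end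

section
/- Let X be an absolutely continuous random variable with support (0,s) and CDF K, and let γ>0 and ψ ≥ 0. Then CPE_γ^ψ(X) ≥ (1/Γ(γ+1)) ∫_0^s ψ(x) K(x) (1 − K(x))^γ dx. -/
open MeasureTheory

theorem Real.mul_one_sub_rpow_le_mul_neg_log_rpow {x γ : ℝ} (hx₀ : 0 ≤ x) (hx₁ : x ≤ 1)
    (hγ : 0 ≤ γ) : x * (1 - x) ^ γ ≤ x * (-Real.log x) ^ γ := by
  rcases hx₀.eq_or_lt with rfl | hx_pos
  · simp
  have hbase : 1 - x ≤ -Real.log x := by linarith [Real.log_le_sub_one_of_pos hx_pos]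
  exact mul_le_mul_of_nonneg_left (Real.rpow_le_rpow (by linarith) hbase hγ) hx₀

theorem wfgcpe_ge_survival_bound_general
    (s : ℝ)
    (μ : Measure ℝ) [IsProbabilityMeasure μ]
    (K : ℝ → ℝ) (hK : ∀ x, K x = (μ (Set.Iic x)).toReal)
    (ψ : ℝ → ℝ) (hψ0 : ∀ x, 0 ≤ ψ x)
    (γ : ℝ) (hγ : 0 < γ)
    (hfin : IntegrableOn (fun x => ψ x * K x * (-Real.log (K x)) ^ γ) (Set.Ioo 0 s)) :
    (1 / Real.Gamma (γ + 1)) *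
        ∫ x in Set.Ioo 0 s, ψ x * K x * (-Real.log (K x)) ^ γ
      ≥ (1 / Real.Gamma (γ + 1)) *
        ∫ x in Set.Ioo 0 s, ψ x * K x * (1 - K x) ^ γ := by
  have hK₀ (x : ℝ) : 0 ≤ K x := hK x ▸ ENNReal.toReal_nonneg
  have hK₁ (x : ℝ) : K x ≤ 1 := hK x ▸ measureReal_le_one
  have hpointwise (x : ℝ) : ψ x * K x * (1 - K x) ^ γ ≤ ψ x * K x * (-Real.log (K x)) ^ γ := by
    simpa only [mul_assoc] using mul_le_mul_of_nonneg_left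
      (Real.mul_one_sub_rpow_le_mul_neg_log_rpow (hK₀ x) (hK₁ x) hγ.le) (hψ0 x)
  have hΓ : 0 ≤ 1 / Real.Gamma (γ + 1) :=
    one_div_nonneg.2 (Real.Gamma_pos_of_pos (by linarith)).le
  have hnonneg (x : ℝ) : 0 ≤ ψ x * K x * (1 - K x) ^ γ :=
    mul_nonneg (mul_nonneg (hψ0 x) (hK₀ x)) (Real.rpow_nonneg (sub_nonneg.2 (hK₁ x)) γ)
  exact mul_le_mul_of_nonneg_left
    (integral_mono_of_nonneg (.of_forall hnonneg) hfin (.of_forall hpointwise)) hΓ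

/-- `CPE_γ^ψ(X) ≥ (1/Γ(γ+1)) ∫_0^s ψ(x) K(x) (1 − K(x))^γ dx`. -/
theorem wfgcpe_ge_survival_bound
    (s : ℝ) (hs : 0 < s)
    (μ : Measure ℝ) [IsProbabilityMeasure μ] (hac : μ ≪ volume)
    (hsupp : μ (Set.Ioo 0 s) = 1)
    (K : ℝ → ℝ) (hK : ∀ x, K x = (μ (Set.Iic x)).toReal)
    (ψ : ℝ → ℝ) (hψ0 : ∀ x, 0 ≤ ψ x)
    (γ : ℝ) (hγ : 0 < γ)
    (hfin : IntegrableOn (fun x => ψ x * K x * (-Real.log (K x)) ^ γ) (Set.Ioo 0 s)) :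
    (1 / Real.Gamma (γ + 1)) *
        ∫ x in Set.Ioo 0 s, ψ x * K x * (-Real.log (K x)) ^ γ
      ≥ (1 / Real.Gamma (γ + 1)) *
        ∫ x in Set.Ioo 0 s, ψ x * K x * (1 - K x) ^ γ :=
  wfgcpe_ge_survival_bound_general s μ K hK ψ hψ0 γ hγ hfin
end

section
/- Let X be an absolutely continuous random variable with support (0,s), CDF K, and finite mean μ = E(X) < +∞, and let γ>0. If the weight function ψ ≥ 0 is nonincreasing, then CPE_γ^ψ(X) ≥ τ_γ^ψ(μ), where τ_γ^ψ(u) = (1/Γ(γ+1)) ∫_u^s ψ(x)(−ln K(x))^γ dx. -/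
open MeasureTheory Set Real ProbabilityTheory

/-! Write `m = E X` and `f = ψ · (-log K)^γ`; `f` is nonincreasing wherever `K > 0`, in particular
on `[m, s)`, because `K m > 0`. The layer-cake formula `m = ∫₀ˢ (1 - K)` says that
`G = K - 𝟙_(m,s)` has integral zero over `(0, s)`. As `G ≥ 0` before `m` and `G ≤ 0` after it,
`G · f ≥ G · f m` pointwise, and integrating gives `∫₀ˢ K f ≥ ∫ₘˢ f`. -/

lemma antitoneOn_mul_neg_log_rpow {ψ K : ℝ → ℝ} {γ : ℝ} (hψ0 : ∀ x, 0 ≤ ψ x) (hψ : Antitone ψ)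
    (hK : Monotone K) (hK1 : ∀ x, K x ≤ 1) (hγ : 0 ≤ γ) :
    AntitoneOn (fun x => ψ x * (-log (K x)) ^ γ) {x | 0 < K x} := by
  intro x hx y _ hxy
  have hKxy := hK hxy
  have hlog_y : 0 ≤ -log (K y) := neg_nonneg.2 (log_nonpos (hx.le.trans hKxy) (hK1 y))
  exact mul_le_mul (hψ hxy) (rpow_le_rpow hlog_y (neg_le_neg (log_le_log hx hKxy)) hγ)
    (rpow_nonneg hlog_y γ) (hψ0 x)

theorem setIntegral_Ioo_le_setIntegral_mul_of_integral_eq {F f : ℝ → ℝ} {a m b : ℝ}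
    (hm : m ∈ Icc a b) (hF : IntegrableOn F (Ioo a b))
    (hFf : IntegrableOn (fun x => F x * f x) (Ioo a b)) (hf : IntegrableOn f (Ioo m b))
    (hbal : ∫ x in Ioo a b, F x = b - m)
    (hlow : ∀ x ∈ Ioc a m, F x * f m ≤ F x * f x)
    (hup : ∀ x ∈ Ioo m b, (1 - F x) * f x ≤ (1 - F x) * f m) :
    ∫ x in Ioo m b, f x ≤ ∫ x in Ioo a b, F x * f x := by
  have hinter : Ioo a b ∩ Ioi m = Ioo m b := by
    ext x
    simp only [mem_inter_iff, mem_Ioo, mem_Ioi]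
    exact ⟨fun ⟨⟨_, hxb⟩, hmx⟩ => ⟨hmx, hxb⟩, fun ⟨hmx, hxb⟩ => ⟨⟨hm.1.trans_lt hmx, hxb⟩, hmx⟩⟩
  have hind : IntegrableOn ((Ioi m).indicator f) (Ioo a b) := by
    rw [IntegrableOn, integrable_indicator_iff measurableSet_Ioi, IntegrableOn,
      Measure.restrict_restrict measurableSet_Ioi, inter_comm, hinter]
    exact hf
  have hind_one : IntegrableOn ((Ioi m).indicator 1) (Ioo a b) :=
    (integrableOn_const (C := (1 : ℝ)) (by simp)).indicator measurableSet_Ioi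
  have hpt : ∀ x ∈ Ioo a b, (F x - (Ioi m).indicator 1 x) * f m
      ≤ F x * f x - (Ioi m).indicator f x := by
    intro x hx
    by_cases hmx : m < x
    · simp only [indicator_of_mem (show x ∈ Ioi m from hmx), Pi.one_apply]
      linarith [hup x ⟨hmx, hx.2⟩]
    · simp only [indicator_of_notMem (show x ∉ Ioi m from hmx), sub_zero]
      exact hlow x ⟨hx.1, not_lt.1 hmx⟩
  have hmono := setIntegral_mono_on ((hF.sub hind_one).mul_const (f m)) (hFf.sub hind)
    measurableSet_Ioo hpt
  rw [integral_mul_const, integral_sub' hF hind_one, integral_sub' hFf hind,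
    setIntegral_indicator measurableSet_Ioi, setIntegral_indicator measurableSet_Ioi, hinter,
    hbal, Pi.one_def, setIntegral_const, volume_real_Ioo_of_le hm.2] at hmono
  simpa using hmono

lemma integrableOn_cdf_Ioo (μ : Measure ℝ) (a b : ℝ) : IntegrableOn (cdf μ) (Ioo a b) :=
  ((monotone_cdf μ).locallyIntegrable.integrableOn_isCompact isCompact_Icc).mono_set
    Ioo_subset_Icc_self

theorem integral_Ioo_cdf_eq_sub_integral {μ : Measure ℝ} [IsProbabilityMeasure μ] {s : ℝ}
    (h : ∀ᵐ x ∂μ, x ∈ Icc 0 s) : ∫ x in Ioo 0 s, cdf μ x = s - ∫ x, x ∂μ := by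
  have hs : 0 ≤ s := let ⟨_, hx⟩ := h.exists; hx.1.trans hx.2
  have hint : Integrable (fun x => x) μ := Integrable.of_mem_Icc 0 s aemeasurable_id h
  have htail : ∀ t, μ.real {x | t < x} = 1 - cdf μ t := fun t => by
    rw [cdf_eq_real, ← probReal_compl_eq_one_sub measurableSet_Iic, compl_Iic]; rfl
  have hvanish : ∀ t ∈ Ioi 0 \ Ioo 0 s, 1 - cdf μ t = 0 := by
    rintro t ⟨ht0, hts⟩
    have hst : s ≤ t := by simp_all
    rw [← htail, measureReal_def, ENNReal.toReal_eq_zero_iff]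
    refine Or.inl (measure_mono_null ?_ (ae_iff.1 h))
    intro x (hx : t < x) hx'
    linarith [hx'.2]
  have hone : IntegrableOn (fun _ => (1 : ℝ)) (Ioo 0 s) := integrableOn_const (by simp)
  rw [hint.integral_eq_integral_meas_lt (h.mono fun x hx => hx.1)]
  simp_rw [htail]
  rw [setIntegral_eq_of_subset_of_forall_sdiff_eq_zero measurableSet_Ioi Ioo_subset_Ioi_self
      hvanish,
    integral_sub hone (integrableOn_cdf_Ioo μ 0 s), setIntegral_const, volume_real_Ioo_of_le hs]
  simp

lemma cdf_integral_id_pos {μ : Measure ℝ} [IsProbabilityMeasure μ]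
    (hint : Integrable (fun x => x) μ) : 0 < cdf μ (∫ x, x ∂μ) := by
  rw [cdf_eq_real, measureReal_def]
  exact ENNReal.toReal_pos (measure_le_integral_pos hint).ne' (measure_ne_top μ _)

theorem setIntegral_Ioo_integral_id_le_setIntegral_cdf_mul {μ : Measure ℝ} [IsProbabilityMeasure μ]
    {s : ℝ} {f : ℝ → ℝ} (h : ∀ᵐ x ∂μ, x ∈ Icc 0 s) (hf : AntitoneOn f {x | 0 < cdf μ x})
    (hcdf_f : IntegrableOn (fun x => cdf μ x * f x) (Ioo 0 s)) :
    ∫ x in Ioo (∫ x, x ∂μ) s, f x ≤ ∫ x in Ioo 0 s, cdf μ x * f x := by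
  set m := ∫ x, x ∂μ
  have hint : Integrable (fun x => x) μ := Integrable.of_mem_Icc 0 s aemeasurable_id h
  have hcdf_m : 0 < cdf μ m := cdf_integral_id_pos hint
  have hcdf_pos : ∀ x, m ≤ x → 0 < cdf μ x := fun x hx => hcdf_m.trans_le (monotone_cdf μ hx)
  have hf_int : IntegrableOn f (Ioo m s) :=
    ((hf.mono fun x hx => hcdf_pos x hx.1).integrableOn_isCompact isCompact_Icc).mono_set
      Ioo_subset_Icc_self
  refine setIntegral_Ioo_le_setIntegral_mul_of_integral_eq
    ((convex_Icc 0 s).integral_mem isClosed_Icc h hint) (integrableOn_cdf_Ioo μ 0 s) hcdf_f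
    hf_int (integral_Ioo_cdf_eq_sub_integral h) (fun x hx => ?_) (fun x hx => ?_)
  · rcases (cdf_nonneg μ x).eq_or_lt with h0 | hpos
    · simp [← h0]
    · exact mul_le_mul_of_nonneg_left (hf hpos hcdf_m hx.2) hpos.le
  · exact mul_le_mul_of_nonneg_left (hf hcdf_m (hcdf_pos x hx.1.le) hx.1.le)
      (sub_nonneg.2 (cdf_le_one μ x))

theorem wfgcpe_ge_tau_at_mean_general
    (s : ℝ)
    (μ : Measure ℝ) [IsProbabilityMeasure μ]
    (hsupp : μ (Set.Ioo 0 s) = 1)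
    (K : ℝ → ℝ) (hK : ∀ x, K x = (μ (Set.Iic x)).toReal)
    (ψ : ℝ → ℝ) (hψ0 : ∀ x, 0 ≤ ψ x) (hψanti : Antitone ψ)
    (γ : ℝ) (hγ : 0 < γ)
    (hfin : IntegrableOn (fun x => ψ x * K x * (-Real.log (K x)) ^ γ) (Set.Ioo 0 s)) :
    (1 / Real.Gamma (γ + 1)) *
        ∫ x in Set.Ioo 0 s, ψ x * K x * (-Real.log (K x)) ^ γ
      ≥ (1 / Real.Gamma (γ + 1)) *
        ∫ x in Set.Ioo (∫ x, x ∂μ) s, ψ x * (-Real.log (K x)) ^ γ := by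
  obtain rfl : K = cdf μ := funext fun x => by rw [hK, cdf_eq_real, measureReal_def]
  have hsupp_ae : ∀ᵐ x ∂μ, x ∈ Icc 0 s :=
    ((ae_iff_prob_eq_one measurableSet_Ioo.mem).2 hsupp).mono fun _ hx => Ioo_subset_Icc_self hx
  have hcomm : (fun x => ψ x * cdf μ x * (-log (cdf μ x)) ^ γ)
      = fun x => cdf μ x * (ψ x * (-log (cdf μ x)) ^ γ) := by
    ext x
    ring
  rw [hcomm] at hfin ⊢
  exact mul_le_mul_of_nonneg_left
    (setIntegral_Ioo_integral_id_le_setIntegral_cdf_mul hsupp_ae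
      (antitoneOn_mul_neg_log_rpow hψ0 hψanti (monotone_cdf μ) (cdf_le_one μ) hγ.le) hfin)
    (by positivity)

/-- If the nonnegative weight `ψ` is nonincreasing, then
`CPE_γ^ψ(X) ≥ τ_γ^ψ(μ)` where `μ = E(X)` is the (finite) mean and
`τ_γ^ψ(u) = (1/Γ(γ+1)) ∫_u^s ψ(x)(−ln K(x))^γ dx`. -/
theorem wfgcpe_ge_tau_at_mean
    (s : ℝ) (hs : 0 < s)
    (μ : Measure ℝ) [IsProbabilityMeasure μ] (hac : μ ≪ volume)
    (hsupp : μ (Set.Ioo 0 s) = 1)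
    (K : ℝ → ℝ) (hK : ∀ x, K x = (μ (Set.Iic x)).toReal)
    (hmean : Integrable (fun x : ℝ => x) μ)
    (ψ : ℝ → ℝ) (hψ0 : ∀ x, 0 ≤ ψ x) (hψanti : Antitone ψ)
    (γ : ℝ) (hγ : 0 < γ)
    (hfin : IntegrableOn (fun x => ψ x * K x * (-Real.log (K x)) ^ γ) (Set.Ioo 0 s)) :
    (1 / Real.Gamma (γ + 1)) *
        ∫ x in Set.Ioo 0 s, ψ x * K x * (-Real.log (K x)) ^ γ
      ≥ (1 / Real.Gamma (γ + 1)) *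
        ∫ x in Set.Ioo (∫ x, x ∂μ) s, ψ x * (-Real.log (K x)) ^ γ :=
  wfgcpe_ge_tau_at_mean_general s μ hsupp K hK ψ hψ0 hψanti γ hγ hfin
end

section
/- Let X₁ and X₂ be random variables with CDFs K₁ and K₂ supported on (0,s) satisfying the proportional reversed hazard rate model K₂(x) = (K₁(x))^η for some η > 0, and let γ>0 and ψ ≥ 0. Then: CPE_γ^ψ(X₂) ≤ η^γ · CPE_γ^ψ(X₁) when η ≥ 1, and CPE_γ^ψ(X₂) ≥ η^γ · CPE_γ^ψ(X₁) when 0 < η ≤ 1. -/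
/-!
Under `K₂ = K₁ ^ η` the logarithm only scales: `-log K₂ = η · (-log K₁)`, so the integrand of
`CPE_γ^ψ(X₂)` is `η ^ γ · ψ · K₁ ^ η · (-log K₁) ^ γ`. Since `0 ≤ K₁ ≤ 1`, the factor `K₁ ^ η` is
below `K₁` for `η ≥ 1` and above it for `η ≤ 1`; integrating this pointwise comparison gives both
inequalities.
-/

open MeasureTheory Filter

section PointwiseBounds

variable {a c η γ : ℝ}

lemma neg_log_rpow_nonneg (ha0 : 0 ≤ a) (ha1 : a ≤ 1) : 0 ≤ (-Real.log a) ^ γ :=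
  Real.rpow_nonneg (neg_nonneg.mpr (Real.log_nonpos ha0 ha1)) γ

lemma mul_mul_neg_log_rpow_nonneg (hc : 0 ≤ c) (ha0 : 0 ≤ a) (ha1 : a ≤ 1) :
    0 ≤ c * a * (-Real.log a) ^ γ :=
  mul_nonneg (mul_nonneg hc ha0) (neg_log_rpow_nonneg ha0 ha1)

lemma neg_log_rpow_rpow (ha0 : 0 ≤ a) (ha1 : a ≤ 1) (hη : 0 < η) :
    (-Real.log (a ^ η)) ^ γ = η ^ γ * (-Real.log a) ^ γ := by
  rcases ha0.eq_or_lt with rfl | ha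
  · rw [Real.zero_rpow hη.ne', Real.log_zero, neg_zero, ← Real.mul_rpow hη.le le_rfl, mul_zero]
  · rw [Real.log_rpow ha, ← mul_neg,
      Real.mul_rpow hη.le (neg_nonneg.mpr (Real.log_nonpos ha0 ha1))]

lemma rpow_mul_neg_log_rpow_le (ha0 : 0 ≤ a) (ha1 : a ≤ 1) (hη : 1 ≤ η) :
    a ^ η * (-Real.log (a ^ η)) ^ γ ≤ η ^ γ * (a * (-Real.log a) ^ γ) := by
  have := neg_log_rpow_nonneg (γ := γ) ha0 ha1
  rw [neg_log_rpow_rpow ha0 ha1 (by linarith), mul_left_comm]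
  gcongr
  exact Real.rpow_le_self_of_le_one ha0 ha1 hη

lemma le_rpow_mul_neg_log_rpow (ha0 : 0 ≤ a) (ha1 : a ≤ 1) (hη0 : 0 < η) (hη1 : η ≤ 1) :
    η ^ γ * (a * (-Real.log a) ^ γ) ≤ a ^ η * (-Real.log (a ^ η)) ^ γ := by
  have := neg_log_rpow_nonneg (γ := γ) ha0 ha1
  rw [neg_log_rpow_rpow ha0 ha1 hη0, mul_left_comm]
  gcongr
  exact Real.self_le_rpow_of_le_one ha0 ha1 hη1

end PointwiseBounds

section IntegralBounds

variable {α : Type*} [MeasurableSpace α] {μ : Measure α} {ψ K : α → ℝ} {η γ : ℝ}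

lemma integral_mul_rpow_mul_neg_log_rpow_le (hψ : ∀ x, 0 ≤ ψ x) (hK0 : ∀ x, 0 ≤ K x)
    (hK1 : ∀ x, K x ≤ 1) (hη : 1 ≤ η)
    (hint : Integrable (fun x => ψ x * K x * (-Real.log (K x)) ^ γ) μ) :
    ∫ x, ψ x * K x ^ η * (-Real.log (K x ^ η)) ^ γ ∂μ
      ≤ η ^ γ * ∫ x, ψ x * K x * (-Real.log (K x)) ^ γ ∂μ := by
  rw [← integral_const_mul]
  refine integral_mono_of_nonneg (Eventually.of_forall fun x => ?_) (hint.const_mul _)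
    (Eventually.of_forall fun x => ?_)
  · exact mul_mul_neg_log_rpow_nonneg (hψ x) (Real.rpow_nonneg (hK0 x) η)
      (Real.rpow_le_one (hK0 x) (hK1 x) (by linarith))
  · simpa only [mul_assoc, mul_left_comm (η ^ γ)] using
      mul_le_mul_of_nonneg_left (rpow_mul_neg_log_rpow_le (γ := γ) (hK0 x) (hK1 x) hη) (hψ x)

lemma le_integral_mul_rpow_mul_neg_log_rpow (hψ : ∀ x, 0 ≤ ψ x) (hK0 : ∀ x, 0 ≤ K x)
    (hK1 : ∀ x, K x ≤ 1) (hη0 : 0 < η) (hη1 : η ≤ 1)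
    (hint : Integrable (fun x => ψ x * K x ^ η * (-Real.log (K x ^ η)) ^ γ) μ) :
    η ^ γ * ∫ x, ψ x * K x * (-Real.log (K x)) ^ γ ∂μ
      ≤ ∫ x, ψ x * K x ^ η * (-Real.log (K x ^ η)) ^ γ ∂μ := by
  rw [← integral_const_mul]
  refine integral_mono_of_nonneg (Eventually.of_forall fun x => ?_) hint
    (Eventually.of_forall fun x => ?_)
  · exact mul_nonneg (Real.rpow_nonneg hη0.le γ)
      (mul_mul_neg_log_rpow_nonneg (hψ x) (hK0 x) (hK1 x))
  · simpa only [mul_assoc, mul_left_comm (η ^ γ)] using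
      mul_le_mul_of_nonneg_left
        (le_rpow_mul_neg_log_rpow (γ := γ) (hK0 x) (hK1 x) hη0 hη1) (hψ x)

end IntegralBounds

theorem wfgcpe_prhr_bound_general
    (s : ℝ)
    (μ₁ : Measure ℝ) [IsProbabilityMeasure μ₁]
    (K₁ K₂ : ℝ → ℝ)
    (hK₁ : ∀ x, K₁ x = (μ₁ (Set.Iic x)).toReal)
    (η : ℝ) (hη : 0 < η)
    (hprhr : ∀ x, K₂ x = (K₁ x) ^ η)
    (ψ : ℝ → ℝ) (hψ0 : ∀ x, 0 ≤ ψ x)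
    (γ : ℝ) (hγ : 0 < γ)
    (hfin₁ : IntegrableOn (fun x => ψ x * K₁ x * (-Real.log (K₁ x)) ^ γ) (Set.Ioo 0 s))
    (hfin₂ : IntegrableOn (fun x => ψ x * K₂ x * (-Real.log (K₂ x)) ^ γ) (Set.Ioo 0 s)) :
    (1 ≤ η →
      (1 / Real.Gamma (γ + 1)) *
          ∫ x in Set.Ioo 0 s, ψ x * K₂ x * (-Real.log (K₂ x)) ^ γ
        ≤ η ^ γ * ((1 / Real.Gamma (γ + 1)) *
            ∫ x in Set.Ioo 0 s, ψ x * K₁ x * (-Real.log (K₁ x)) ^ γ))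
    ∧ (η ≤ 1 →
      (1 / Real.Gamma (γ + 1)) *
          ∫ x in Set.Ioo 0 s, ψ x * K₂ x * (-Real.log (K₂ x)) ^ γ
        ≥ η ^ γ * ((1 / Real.Gamma (γ + 1)) *
            ∫ x in Set.Ioo 0 s, ψ x * K₁ x * (-Real.log (K₁ x)) ^ γ)) := by
  have hK0 : ∀ x, 0 ≤ K₁ x := fun x => hK₁ x ▸ ENNReal.toReal_nonneg
  have hK1 : ∀ x, K₁ x ≤ 1 := fun x => hK₁ x ▸ measureReal_le_one
  have hΓ : 0 ≤ 1 / Real.Gamma (γ + 1) :=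
    one_div_nonneg.mpr (Real.Gamma_pos_of_pos (by linarith)).le
  simp only [hprhr] at hfin₂ ⊢
  rw [mul_left_comm]
  exact ⟨fun hη1 => mul_le_mul_of_nonneg_left
      (integral_mul_rpow_mul_neg_log_rpow_le hψ0 hK0 hK1 hη1 hfin₁) hΓ,
    fun hη1 => mul_le_mul_of_nonneg_left
      (le_integral_mul_rpow_mul_neg_log_rpow hψ0 hK0 hK1 hη hη1 hfin₂) hΓ⟩

/-- Under the proportional reversed hazard rate model
`K₂(x) = (K₁(x))^η`, `η > 0`: `CPE_γ^ψ(X₂) ≤ η^γ CPE_γ^ψ(X₁)` when `η ≥ 1`, and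
`CPE_γ^ψ(X₂) ≥ η^γ CPE_γ^ψ(X₁)` when `0 < η ≤ 1`. -/
theorem wfgcpe_prhr_bound
    (s : ℝ) (hs : 0 < s)
    (μ₁ μ₂ : Measure ℝ) [IsProbabilityMeasure μ₁] [IsProbabilityMeasure μ₂]
    (hac₁ : μ₁ ≪ volume) (hac₂ : μ₂ ≪ volume)
    (hsupp₁ : μ₁ (Set.Ioo 0 s) = 1) (hsupp₂ : μ₂ (Set.Ioo 0 s) = 1)
    (K₁ K₂ : ℝ → ℝ)
    (hK₁ : ∀ x, K₁ x = (μ₁ (Set.Iic x)).toReal)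
    (hK₂ : ∀ x, K₂ x = (μ₂ (Set.Iic x)).toReal)
    (η : ℝ) (hη : 0 < η)
    (hprhr : ∀ x, K₂ x = (K₁ x) ^ η)
    (ψ : ℝ → ℝ) (hψ0 : ∀ x, 0 ≤ ψ x)
    (γ : ℝ) (hγ : 0 < γ)
    (hfin₁ : IntegrableOn (fun x => ψ x * K₁ x * (-Real.log (K₁ x)) ^ γ) (Set.Ioo 0 s))
    (hfin₂ : IntegrableOn (fun x => ψ x * K₂ x * (-Real.log (K₂ x)) ^ γ) (Set.Ioo 0 s)) :
    (1 ≤ η →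
      (1 / Real.Gamma (γ + 1)) *
          ∫ x in Set.Ioo 0 s, ψ x * K₂ x * (-Real.log (K₂ x)) ^ γ
        ≤ η ^ γ * ((1 / Real.Gamma (γ + 1)) *
            ∫ x in Set.Ioo 0 s, ψ x * K₁ x * (-Real.log (K₁ x)) ^ γ))
    ∧ (η ≤ 1 →
      (1 / Real.Gamma (γ + 1)) *
          ∫ x in Set.Ioo 0 s, ψ x * K₂ x * (-Real.log (K₂ x)) ^ γ
        ≥ η ^ γ * ((1 / Real.Gamma (γ + 1)) *
            ∫ x in Set.Ioo 0 s, ψ x * K₁ x * (-Real.log (K₁ x)) ^ γ)) :=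
  wfgcpe_prhr_bound_general s μ₁ K₁ K₂ hK₁ η hη hprhr ψ hψ0 γ hγ hfin₁ hfin₂
end

section
/- Let T₁, T₂, … be independent and identically distributed nonnegative absolutely continuous random variables with common CDF K supported on (0,s), satisfying E|T₁|^p < ∞ for some p > 2, let ψ ≥ 0 be a fixed integrable weight function and γ > 0. Let K̂_n denote the empirical distribution function of the first n observations, K̂_n(x) = (1/n)∑_{i=1}^n 1{T_i ≤ x}, and define the empirical WFGCPE CPE_γ^ψ(K̂_n) = (1/Γ(γ+1)) ∫_0^s ψ(x) K̂_n(x) (−ln K̂_n(x))^γ dx (with the convention 0·(−ln 0)^γ = 0). Then CPE_γ^ψ(K̂_n) → CPE_γ^ψ(X) almost surely as n → ∞, where X has CDF K. -/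
/-!
For each fixed `x`, the strong law of large numbers applied to the indicators `1{Tᵢ ≤ x}` gives
`K̂ₙ(x) → K(x)` almost surely; since the convergence set is jointly measurable in `(ω, x)`, Fubini
turns this into: almost surely, `K̂ₙ(x) → K(x)` for almost every `x`. The map `u ↦ u (-ln u)^γ` is
continuous on `[0, 1]` (it vanishes at `0` because `t^γ e^{-t} → 0`), hence bounded there, so the
integrands are dominated by a multiple of `|ψ|` and dominated convergence concludes.
-/

open MeasureTheory Set Filter ProbabilityTheory Topology

theorem tendsto_mul_neg_log_rpow_nhdsGT_zero (γ : ℝ) :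
    Tendsto (fun u : ℝ => u * (-Real.log u) ^ γ) (𝓝[>] 0) (𝓝 0) := by
  have hneg_log : Tendsto (fun u : ℝ => -Real.log u) (𝓝[>] 0) atTop :=
    tendsto_neg_atBot_atTop.comp Real.tendsto_log_nhdsGT_zero
  refine ((tendsto_rpow_mul_exp_neg_mul_atTop_nhds_zero γ 1 one_pos).comp hneg_log).congr' ?_
  filter_upwards [self_mem_nhdsWithin] with u (hu : 0 < u)
  rw [Function.comp_apply, neg_one_mul, neg_neg, Real.exp_log hu, mul_comm]

theorem continuousOn_mul_neg_log_rpow {γ : ℝ} (hγ : 0 ≤ γ) :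
    ContinuousOn (fun u : ℝ => u * (-Real.log u) ^ γ) (Ici 0) := by
  intro u hu
  rcases (mem_Ici.1 hu).eq_or_lt with rfl | hu
  · rw [← Ioi_insert, ContinuousWithinAt, nhdsWithin_insert, tendsto_sup]
    exact ⟨tendsto_pure_nhds _ _, by simpa using tendsto_mul_neg_log_rpow_nhdsGT_zero γ⟩
  · exact (continuousAt_id.mul
      ((Real.continuousAt_log hu.ne').neg.rpow_const (Or.inr hγ))).continuousWithinAt

theorem tendsto_integral_mul_comp_of_ae_tendsto {α : Type*} [MeasurableSpace α] {ν : Measure α}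
    {ψ : α → ℝ} (hψ : Integrable ψ ν) {g : ℝ → ℝ} (hg : ContinuousOn g (Icc 0 1))
    (hgm : Measurable g) {f : ℕ → α → ℝ} {F : α → ℝ} (hfm : ∀ n, AEMeasurable (f n) ν)
    (hf : ∀ n x, f n x ∈ Icc 0 1) (hlim : ∀ᵐ x ∂ν, Tendsto (fun n => f n x) atTop (𝓝 (F x))) :
    Tendsto (fun n => ∫ x, ψ x * g (f n x) ∂ν) atTop (𝓝 (∫ x, ψ x * g (F x) ∂ν)) := by
  obtain ⟨C, hC⟩ := isCompact_Icc.exists_bound_of_continuousOn hg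
  refine tendsto_integral_of_dominated_convergence (fun x => ‖ψ x‖ * C)
    (fun n => hψ.aestronglyMeasurable.mul (hgm.comp_aemeasurable (hfm n)).aestronglyMeasurable)
    (hψ.norm.mul_const C) (fun n => Eventually.of_forall fun x => ?_) ?_
  · rw [norm_mul]
    exact mul_le_mul_of_nonneg_left (hC _ (hf n x)) (norm_nonneg _)
  · filter_upwards [hlim] with x hx
    have hf_x : ∀ᶠ n in atTop, f n x ∈ Icc 0 1 := Eventually.of_forall (hf · x)
    have hF : F x ∈ Icc 0 1 := isClosed_Icc.mem_of_tendsto hx hf_x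
    exact ((hg _ hF).tendsto.comp (tendsto_nhdsWithin_iff.2 ⟨hx, hf_x⟩)).const_mul (ψ x)

section EmpiricalCDF

variable {Ω : Type*}

noncomputable def empiricalCDF (T : ℕ → Ω → ℝ) (n : ℕ) (ω : Ω) (x : ℝ) : ℝ :=
  (1 / (n : ℝ)) * ∑ i ∈ Finset.range n, if T i ω ≤ x then (1 : ℝ) else 0

theorem empiricalCDF_mem_Icc (T : ℕ → Ω → ℝ) (n : ℕ) (ω : Ω) (x : ℝ) :
    empiricalCDF T n ω x ∈ Icc 0 1 := by
  rw [empiricalCDF, Finset.sum_boole]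
  have hcard : ((Finset.range n).filter fun i => T i ω ≤ x).card ≤ n :=
    (Finset.card_filter_le _ _).trans (Finset.card_range n).le
  rcases n.eq_zero_or_pos with rfl | hn
  · simp
  refine ⟨by positivity, ?_⟩
  rw [one_div, inv_mul_le_one₀ (by exact_mod_cast hn)]
  exact_mod_cast hcard

variable [MeasurableSpace Ω]

theorem measurable_empiricalCDF_uncurry {T : ℕ → Ω → ℝ} (hT : ∀ i, Measurable (T i)) (n : ℕ) :
    Measurable fun q : Ω × ℝ => empiricalCDF T n q.1 q.2 :=
  (Finset.measurable_sum _ fun i _ => Measurable.ite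
    (measurableSet_le ((hT i).comp measurable_fst) measurable_snd)
    measurable_const measurable_const).const_mul _

theorem ae_tendsto_empiricalCDF {P : Measure Ω} [IsProbabilityMeasure P] {T : ℕ → Ω → ℝ}
    (hT : ∀ i, Measurable (T i)) (hindep : Pairwise fun i j => IndepFun (T i) (T j) P)
    {μ : Measure ℝ} [IsProbabilityMeasure μ] (hident : ∀ i, P.map (T i) = μ) (x : ℝ) :
    ∀ᵐ ω ∂P, Tendsto (fun n => empiricalCDF T n ω x) atTop (𝓝 (cdf μ x)) := by
  set φ : ℝ → ℝ := (Iic x).indicator 1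
  have hφ : Measurable φ := measurable_const.indicator measurableSet_Iic
  have hX_int : Integrable (φ ∘ T 0) P :=
    (integrable_const (1 : ℝ)).mono' (hφ.comp (hT 0)).aestronglyMeasurable
      (Eventually.of_forall fun ω => by
        simp only [φ, Function.comp_apply, indicator]; split_ifs <;> simp)
  have hX_ident : ∀ i, IdentDistrib (φ ∘ T i) (φ ∘ T 0) P P := fun i =>
    (IdentDistrib.mk (hT i).aemeasurable (hT 0).aemeasurable (by rw [hident i, hident 0])).comp hφ
  have hX_mean : ∫ ω, (φ ∘ T 0) ω ∂P = cdf μ x := by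
    rw [Function.comp_def, ← integral_map (hT 0).aemeasurable hφ.aestronglyMeasurable, hident 0,
      integral_indicator_one measurableSet_Iic, cdf_eq_real]
  filter_upwards [strong_law_ae_real (fun i => φ ∘ T i) hX_int
    (fun i j hij => (hindep hij).comp hφ hφ) hX_ident] with ω hω
  rw [hX_mean] at hω
  refine hω.congr fun n => ?_
  simp only [empiricalCDF, φ, Function.comp_apply, indicator, mem_Iic, Pi.one_apply]
  rw [one_div, inv_mul_eq_div]

theorem ae_ae_tendsto_empiricalCDF {P : Measure Ω} [IsProbabilityMeasure P] {T : ℕ → Ω → ℝ}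
    (hT : ∀ i, Measurable (T i)) (hindep : Pairwise fun i j => IndepFun (T i) (T j) P)
    {μ : Measure ℝ} [IsProbabilityMeasure μ] (hident : ∀ i, P.map (T i) = μ)
    (ν : Measure ℝ) [SFinite ν] :
    ∀ᵐ ω ∂P, ∀ᵐ x ∂ν, Tendsto (fun n => empiricalCDF T n ω x) atTop (𝓝 (cdf μ x)) :=
  (Measure.ae_ae_comm (measurableSet_tendsto_fun (measurable_empiricalCDF_uncurry hT)
    ((cdf μ).mono.measurable.comp measurable_snd))).2
    (Eventually.of_forall (ae_tendsto_empiricalCDF hT hindep hident))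

end EmpiricalCDF

theorem empirical_wfgcpe_strong_consistency_general
    {Ω : Type*} [MeasurableSpace Ω] (P : Measure Ω) [IsProbabilityMeasure P]
    (T : ℕ → Ω → ℝ) (hTm : ∀ i, Measurable (T i))
    (hindep : iIndepFun T P)
    (μ : Measure ℝ) [IsProbabilityMeasure μ]
    (hident : ∀ i, Measure.map (T i) P = μ)
    (s : ℝ)
    (K : ℝ → ℝ) (hK : ∀ x, K x = (μ (Set.Iic x)).toReal)
    (ψ : ℝ → ℝ) (hψint : IntegrableOn ψ (Set.Ioo 0 s))
    (γ : ℝ) (hγ : 0 < γ)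
    (Kemp : ℕ → Ω → ℝ → ℝ)
    (hKemp : ∀ n ω x, Kemp n ω x =
      (1 / (n : ℝ)) * ∑ i ∈ Finset.range n, if T i ω ≤ x then (1 : ℝ) else 0) :
    ∀ᵐ ω ∂P, Tendsto
      (fun n : ℕ => (1 / Real.Gamma (γ + 1)) *
        ∫ x in Set.Ioo 0 s, ψ x * Kemp n ω x * (-Real.log (Kemp n ω x)) ^ γ)
      atTop
      (nhds ((1 / Real.Gamma (γ + 1)) *
        ∫ x in Set.Ioo 0 s, ψ x * K x * (-Real.log (K x)) ^ γ)) := by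
  obtain rfl : K = cdf μ := funext fun x => by rw [hK, cdf_eq_real, measureReal_def]
  obtain rfl : Kemp = empiricalCDF T := by funext n ω x; exact hKemp n ω x
  filter_upwards [ae_ae_tendsto_empiricalCDF hTm (fun i j hij => hindep.indepFun hij) hident
    (volume.restrict (Ioo 0 s))] with ω hω
  simp only [mul_assoc]
  exact (tendsto_integral_mul_comp_of_ae_tendsto hψint
    ((continuousOn_mul_neg_log_rpow hγ.le).mono Icc_subset_Ici_self) (by fun_prop)
    (fun n => ((measurable_empiricalCDF_uncurry hTm n).comp measurable_prodMk_left).aemeasurable)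
    (empiricalCDF_mem_Icc T · ω) hω).const_mul _

/-- Strong consistency of the empirical WFGCPE: for an i.i.d. sample
`T₁, T₂, …` with common absolutely continuous CDF `K` supported on `(0,s)` and a
finite `p`-th absolute moment for some `p > 2`, the empirical WFGCPE converges
almost surely to `CPE_γ^ψ(X)`. -/
theorem empirical_wfgcpe_strong_consistency
    {Ω : Type*} [MeasurableSpace Ω] (P : Measure Ω) [IsProbabilityMeasure P]
    (T : ℕ → Ω → ℝ) (hTm : ∀ i, Measurable (T i))
    (hindep : iIndepFun T P)
    (μ : Measure ℝ) [IsProbabilityMeasure μ]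
    (hident : ∀ i, Measure.map (T i) P = μ)
    (hac : μ ≪ volume)
    (s : ℝ) (hs : 0 < s) (hsupp : μ (Set.Ioo 0 s) = 1)
    (K : ℝ → ℝ) (hK : ∀ x, K x = (μ (Set.Iic x)).toReal)
    (p : ℝ) (hp : 2 < p)
    (hmom : Integrable (fun ω => |T 0 ω| ^ p) P)
    (ψ : ℝ → ℝ) (hψ0 : ∀ x, 0 ≤ ψ x) (hψint : IntegrableOn ψ (Set.Ioo 0 s))
    (γ : ℝ) (hγ : 0 < γ)
    (Kemp : ℕ → Ω → ℝ → ℝ)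
    (hKemp : ∀ n ω x, Kemp n ω x =
      (1 / (n : ℝ)) * ∑ i ∈ Finset.range n, if T i ω ≤ x then (1 : ℝ) else 0)
    (hfin : IntegrableOn (fun x => ψ x * K x * (-Real.log (K x)) ^ γ) (Set.Ioo 0 s)) :
    ∀ᵐ ω ∂P, Tendsto
      (fun n : ℕ => (1 / Real.Gamma (γ + 1)) *
        ∫ x in Set.Ioo 0 s, ψ x * Kemp n ω x * (-Real.log (Kemp n ω x)) ^ γ)
      atTop
      (nhds ((1 / Real.Gamma (γ + 1)) *
        ∫ x in Set.Ioo 0 s, ψ x * K x * (-Real.log (K x)) ^ γ)) :=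
  empirical_wfgcpe_strong_consistency_general P T hTm hindep μ hident s K hK ψ hψint γ hγ Kemp hKemp
end
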